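/- arXiv:1804.06013 — 10 statements merged into one kernel-verified Lean document; each statement's English description precedes it below -/
import Mathlib

section
/- If [A]_R^{-s} and [A]_L^{-t} are both defined, equal, and begin with a basic session type constructor (i.e., are not of the form Next, Box, or Diamond), then s = t. -/
inductive STy (σ : Type) : Type
  | base : σ → STy σ
  | next : STy σ → STy σ
  | box  : STy σ → STy σ
  | dia  : STy σ → STy σ

variable {σ : Type}

def shiftL1 : STy σ → Option (STy σ)
  | .next A => some A
  | .box A  => some (.box A)
  | _ => none

def shiftR1 : STy σ → Option (STy σ)
  | .next A => some A
  | .dia A  => some (.dia A)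
  | _ => none

def shiftL : STy σ → ℕ → Option (STy σ)
  | A, 0 => some A
  | A, t+1 => (shiftL A t).bind shiftL1

def shiftR : STy σ → ℕ → Option (STy σ)
  | A, 0 => some A
  | A, t+1 => (shiftR A t).bind shiftR1

inductive TSub : STy σ → STy σ → Prop
  | refl (A) : TSub A A
  | nextNext {A B} : TSub A B → TSub (.next A) (.next B)
  | boxNext {A B} : TSub (.box A) B → TSub (.box A) (.next B)
  | nextDia {A B} : TSub A (.dia B) → TSub (.next A) (.dia B)
  | boxR {A B} (n : ℕ) : TSub (STy.next^[n] (.box A)) B → TSub (STy.next^[n] (.box A)) (.box B)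
  | boxL {A B} : TSub A B → TSub (.box A) B
  | diaR {A B} : TSub A B → TSub A (.dia B)
  | diaL {A B} (n : ℕ) : TSub A (STy.next^[n] (.dia B)) → TSub (.dia A) (STy.next^[n] (.dia B))

inductive WTSub : STy σ → STy σ → Prop
  | refl (A) : WTSub A A
  | boxWeak {A} {m n : ℕ} : m ≤ n → WTSub (STy.next^[m] (.box A)) (STy.next^[n] (.box A))
  | diaWeak {A} {m n : ℕ} : m ≥ n → WTSub (STy.next^[m] (.dia A)) (STy.next^[n] (.dia A))

/-! A shift that ends outside `box` (resp. `dia`) can only have peeled `next`s, one per step,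
so `A = next^[s] (base b) = next^[t] (base b)`. -/

namespace STy

theorem sizeOf_iterate_next (n : ℕ) (C : STy σ) : sizeOf (next^[n] C) = n + sizeOf C := by
  induction n with
  | zero => simp
  | succ n ih => rw [Function.iterate_succ_apply', next.sizeOf_spec, ih]; omega

theorem iterate_next_injective (C : STy σ) : Function.Injective (next^[·] C) := fun m n h => by
  simpa [sizeOf_iterate_next] using congrArg sizeOf h

theorem eq_next_of_shiftL1_eq_some {B C : STy σ} (h : shiftL1 B = some C)
    (hC : ∀ D, C ≠ box D) : B = next C := by
  cases B <;> simp only [shiftL1, Option.some.injEq, reduceCtorEq] at h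
  · rw [h]
  · exact absurd h.symm (hC _)

theorem eq_next_of_shiftR1_eq_some {B C : STy σ} (h : shiftR1 B = some C)
    (hC : ∀ D, C ≠ dia D) : B = next C := by
  cases B <;> simp only [shiftR1, Option.some.injEq, reduceCtorEq] at h
  · rw [h]
  · exact absurd h.symm (hC _)

theorem eq_iterate_next_of_shiftL_eq_some {A C : STy σ} {t : ℕ} (h : shiftL A t = some C)
    (hC : ∀ D, C ≠ box D) : A = next^[t] C := by
  induction t generalizing C with
  | zero => simpa [shiftL, eq_comm] using h
  | succ t ih =>
    obtain ⟨B, hB, hBC⟩ := Option.bind_eq_some_iff.mp h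
    have hB_next : B = next C := eq_next_of_shiftL1_eq_some hBC hC
    rw [ih hB (by simp [hB_next]), hB_next, Function.iterate_succ_apply]

theorem eq_iterate_next_of_shiftR_eq_some {A C : STy σ} {s : ℕ} (h : shiftR A s = some C)
    (hC : ∀ D, C ≠ dia D) : A = next^[s] C := by
  induction s generalizing C with
  | zero => simpa [shiftR, eq_comm] using h
  | succ s ih =>
    obtain ⟨B, hB, hBC⟩ := Option.bind_eq_some_iff.mp h
    have hB_next : B = next C := eq_next_of_shiftR1_eq_some hBC hC
    rw [ih hB (by simp [hB_next]), hB_next, Function.iterate_succ_apply]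

end STy

theorem stmt3 (A C : STy σ) (s t : ℕ) (b : σ) (hR : shiftR A s = some C) (hL : shiftL A t = some C) (hb : C = .base b) : s = t := by
  subst hb
  have hAR := STy.eq_iterate_next_of_shiftR_eq_some hR (by simp)
  have hAL := STy.eq_iterate_next_of_shiftL_eq_some hL (by simp)
  exact STy.iterate_next_injective _ (hAR.symm.trans hAL)
end

section
/- If [A]_L^{-t} is defined and equals Box B, and [A]_R^{-s} is defined and is not of the form Next C for any C, then s ≤ t and [A]_R^{-s} = Box B. -/
variable {σ : Type}

lemma shiftL_succ_front (A : STy σ) (t : ℕ) :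
    shiftL A (t+1) = (shiftL1 A).bind (fun X => shiftL X t) := by
  induction t generalizing A with
  | zero => simp [shiftL]
  | succ t ih =>
      show (shiftL A (t+1)).bind shiftL1 = _
      rw [ih]
      cases h : shiftL1 A <;> simp [shiftL]

lemma shiftR_succ_front (A : STy σ) (t : ℕ) :
    shiftR A (t+1) = (shiftR1 A).bind (fun X => shiftR X t) := by
  induction t generalizing A with
  | zero => simp [shiftR]
  | succ t ih =>
      show (shiftR A (t+1)).bind shiftR1 = _
      rw [ih]
      cases h : shiftR1 A <;> simp [shiftR]

lemma shiftL_box_char (A B : STy σ) (t : ℕ) (h : shiftL A t = some (.box B)) :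
    ∃ k ≤ t, A = STy.next^[k] (.box B) := by
  induction t generalizing A with
  | zero =>
      simp [shiftL] at h
      exact ⟨0, le_refl 0, by simp [h]⟩
  | succ t ih =>
      rw [shiftL_succ_front] at h
      cases A with
      | base a => simp [shiftL1] at h
      | dia A' => simp [shiftL1] at h
      | next A' =>
          simp only [shiftL1, Option.bind_some] at h
          obtain ⟨k, hk, rfl⟩ := ih _ h
          exact ⟨k+1, Nat.succ_le_succ hk, by
            rw [Function.iterate_succ_apply']⟩
      | box A' =>
          simp only [shiftL1, Option.bind_some] at h
          have : (STy.box A' : STy σ) = .box B := by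
            clear ih
            induction t with
            | zero => simpa [shiftL] using h
            | succ t ih2 =>
                rw [shiftL_succ_front] at h
                simp only [shiftL1, Option.bind_some] at h
                exact ih2 h
          exact ⟨0, Nat.zero_le _, by simp [this]⟩

lemma shiftR_next_box (B C : STy σ) (k s : ℕ)
    (h : shiftR (STy.next^[k] (.box B)) s = some C) :
    s ≤ k ∧ C = STy.next^[k-s] (.box B) := by
  induction s generalizing k with
  | zero => simp [shiftR] at h; exact ⟨Nat.zero_le _, h.symm⟩
  | succ s ih =>
      rw [shiftR_succ_front] at h
      cases k with
      | zero => simp [shiftR1] at h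
      | succ k =>
          rw [Function.iterate_succ_apply'] at h
          simp only [shiftR1, Option.bind_some] at h
          obtain ⟨hk, hc⟩ := ih k h
          exact ⟨Nat.succ_le_succ hk, by simpa [Nat.succ_sub_succ] using hc⟩

theorem stmt4 (A B C : STy σ) (t s : ℕ) (hL : shiftL A t = some (.box B)) (hR : shiftR A s = some C) (hC : ∀ D, C ≠ .next D) : s ≤ t ∧ C = STy.box B := by
  obtain ⟨k, hkt, rfl⟩ := shiftL_box_char A B t hL
  obtain ⟨hsk, hc⟩ := shiftR_next_box B C k s hR
  have hks : k - s = 0 := by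
    by_contra h
    obtain ⟨j, hj⟩ := Nat.exists_eq_succ_of_ne_zero h
    rw [hj, Function.iterate_succ_apply'] at hc
    exact hC _ hc
  have : k ≤ s := Nat.le_of_sub_eq_zero hks
  exact ⟨le_trans hsk hkt, by simpa [hks] using hc⟩
end

section
/- If [A]_R^{-t} is defined and equals Diamond B, and [A]_L^{-s} is defined and is not of the form Next C for any C, then s ≤ t and [A]_L^{-s} = Diamond B. -/
variable {σ : Type}

lemma shiftR_succ' (A : STy σ) (t : ℕ) :
    shiftR A (t+1) = (shiftR1 A).bind (fun A' => shiftR A' t) := by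
  induction t generalizing A with
  | zero =>
    cases h : shiftR1 A <;> simp [shiftR, h]
  | succ t ih =>
    show (shiftR A (t+1)).bind shiftR1 = _
    rw [ih]
    cases h : shiftR1 A <;> simp [shiftR]

lemma shiftL_succ' (A : STy σ) (t : ℕ) :
    shiftL A (t+1) = (shiftL1 A).bind (fun A' => shiftL A' t) := by
  induction t generalizing A with
  | zero =>
    cases h : shiftL1 A <;> simp [shiftL, h]
  | succ t ih =>
    show (shiftL A (t+1)).bind shiftL1 = _
    rw [ih]
    cases h : shiftL1 A <;> simp [shiftL]

lemma shiftR_dia (X : STy σ) (t : ℕ) : shiftR (.dia X) t = some (.dia X) := by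
  induction t with
  | zero => rfl
  | succ t ih => show (shiftR _ t).bind shiftR1 = _; rw [ih]; rfl

lemma shiftR_dia_inv (A B : STy σ) (t : ℕ) (h : shiftR A t = some (.dia B)) :
    ∃ m ≤ t, A = STy.next^[m] (.dia B) := by
  induction t generalizing A with
  | zero => exact ⟨0, le_refl _, by simpa [shiftR] using h⟩
  | succ t ih =>
    rw [shiftR_succ'] at h
    cases A with
    | base s => simp [shiftR1] at h
    | box A' => simp [shiftR1] at h
    | next A' =>
      simp only [shiftR1, Option.bind_some] at h
      obtain ⟨m, hm, rfl⟩ := ih A' h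
      exact ⟨m+1, by omega, by rw [Function.iterate_succ_apply']⟩
    | dia A' =>
      simp only [shiftR1, Option.bind_some, shiftR_dia, Option.some_inj] at h
      exact ⟨0, by omega, by simp [h]⟩

lemma shiftL_next_dia (B C : STy σ) (m s : ℕ)
    (h : shiftL (STy.next^[m] (.dia B)) s = some C) :
    s ≤ m ∧ C = STy.next^[m - s] (.dia B) := by
  induction s generalizing m with
  | zero => exact ⟨Nat.zero_le _, by simpa [shiftL] using h.symm⟩
  | succ s ih =>
    rw [shiftL_succ'] at h
    cases m with
    | zero => simp [shiftL1] at h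
    | succ k =>
      rw [Function.iterate_succ_apply'] at h
      simp only [shiftL1, Option.bind_some] at h
      obtain ⟨hsk, hC⟩ := ih k h
      exact ⟨by omega, by rwa [Nat.succ_sub_succ]⟩

theorem stmt5 (A B C : STy σ) (t s : ℕ) (hR : shiftR A t = some (.dia B)) (hL : shiftL A s = some C) (hC : ∀ D, C ≠ .next D) : s ≤ t ∧ C = STy.dia B := by
  obtain ⟨m, hmt, rfl⟩ := shiftR_dia_inv A B t hR
  obtain ⟨hsm, rfl⟩ := shiftL_next_dia B _ m s hL
  rcases Nat.eq_zero_or_pos (m - s) with h0 | hpos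
  · rw [h0] at hC ⊢
    exact ⟨by omega, rfl⟩
  · obtain ⟨k, hk⟩ := Nat.exists_eq_succ_of_ne_zero (by omega : m - s ≠ 0)
    rw [hk, Function.iterate_succ_apply'] at hC
    exact absurd rfl (hC _)
end

section
/- The subtyping relation ≤ on temporal session types is transitive: if A ≤ B and B ≤ C then A ≤ C. -/
variable {σ : Type}

namespace Tmp

lemma iter_succ' (n : ℕ) (X : STy σ) :
    STy.next^[n+1] X = .next (STy.next^[n] X) := Function.iterate_succ_apply' _ _ _

lemma iter_box_ne_iter_dia (n : ℕ) (A : STy σ) :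
    ∀ (k : ℕ) (B : STy σ), STy.next^[n] (.box A) ≠ STy.next^[k] (.dia B) := by
  induction n with
  | zero => intro k B; cases k <;> simp [iter_succ']
  | succ n ih =>
    intro k B
    cases k with
    | zero => simp [iter_succ']
    | succ k => simp only [iter_succ']; intro h; exact ih k B (by injection h)

lemma iter_box_inj {n k : ℕ} {A B : STy σ}
    (h : STy.next^[n] (.box A) = STy.next^[k] (.box B)) : n = k ∧ A = B := by
  induction n generalizing k with
  | zero =>
    cases k with
    | zero => simpa using h
    | succ k => simp [iter_succ'] at h
  | succ n ih =>
    cases k with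
    | zero => simp [iter_succ'] at h
    | succ k =>
      simp only [iter_succ', STy.next.injEq] at h
      obtain ⟨h1, h2⟩ := ih h
      exact ⟨by omega, h2⟩

lemma iter_dia_inj {n k : ℕ} {A B : STy σ}
    (h : STy.next^[n] (.dia A) = STy.next^[k] (.dia B)) : n = k ∧ A = B := by
  induction n generalizing k with
  | zero =>
    cases k with
    | zero => simpa using h
    | succ k => simp [iter_succ'] at h
  | succ n ih =>
    cases k with
    | zero => simp [iter_succ'] at h
    | succ k =>
      simp only [iter_succ', STy.next.injEq] at h
      obtain ⟨h1, h2⟩ := ih h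
      exact ⟨by omega, h2⟩

lemma boxWeakSucc (n : ℕ) (A : STy σ) :
    TSub (STy.next^[n] (.box A)) (STy.next^[n+1] (.box A)) := by
  induction n with
  | zero => exact TSub.boxNext (TSub.refl _)
  | succ n ih =>
    simp only [iter_succ'] at ih ⊢
    exact TSub.nextNext ih

lemma diaWeakSucc (n : ℕ) (A : STy σ) :
    TSub (STy.next^[n+1] (.dia A)) (STy.next^[n] (.dia A)) := by
  induction n with
  | zero => exact TSub.nextDia (TSub.refl _)
  | succ n ih =>
    simp only [iter_succ'] at ih ⊢
    exact TSub.nextNext ih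

lemma boxLHS {A B : STy σ} (h : TSub A B) :
    ∀ (n : ℕ) (Y : STy σ), B = STy.next^[n] (.box Y) →
      ∃ (m : ℕ) (X : STy σ), A = STy.next^[m] (.box X) := by
  induction h with
  | refl A => exact fun n Y e => ⟨n, Y, e⟩
  | nextNext p ih =>
    intro n Y e
    cases n with
    | zero => simp at e
    | succ n =>
      rw [iter_succ'] at e
      injection e with e2
      obtain ⟨m, X, hA⟩ := ih n Y e2
      exact ⟨m+1, X, by rw [iter_succ', hA]⟩
  | boxNext p ih => exact fun _ _ _ => ⟨0, _, rfl⟩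
  | nextDia p ih =>
    intro n Y e; cases n <;> simp [iter_succ'] at e
  | boxR m p ih => exact fun _ _ _ => ⟨m, _, rfl⟩
  | boxL p ih => exact fun _ _ _ => ⟨0, _, rfl⟩
  | diaR p ih =>
    intro n Y e; cases n <;> simp [iter_succ'] at e
  | diaL k p ih =>
    intro n Y e
    exact absurd e.symm (iter_box_ne_iter_dia n Y k _)

lemma diaRHS {A B : STy σ} (h : TSub A B) :
    ∀ (n : ℕ) (X : STy σ), A = STy.next^[n] (.dia X) →
      ∃ (j : ℕ) (Y : STy σ), B = STy.next^[j] (.dia Y) := by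
  induction h with
  | refl A => exact fun n X e => ⟨n, X, e⟩
  | nextNext p ih =>
    intro n X e
    cases n with
    | zero => simp at e
    | succ n =>
      rw [iter_succ'] at e
      injection e with e2
      obtain ⟨j, Y, hB⟩ := ih n X e2
      exact ⟨j+1, Y, by rw [iter_succ', hB]⟩
  | boxNext p ih =>
    intro n X e; cases n <;> simp [iter_succ'] at e
  | nextDia p ih => exact fun _ _ _ => ⟨0, _, rfl⟩
  | boxR m p ih =>
    intro n X e
    exact absurd e (iter_box_ne_iter_dia m _ n X)
  | boxL p ih =>
    intro n X e; cases n <;> simp [iter_succ'] at e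
  | diaR p ih => exact fun _ _ _ => ⟨0, _, rfl⟩
  | diaL k p ih => exact fun _ _ _ => ⟨k, _, rfl⟩

lemma boxStripL {L C : STy σ} (h : TSub L C) :
    ∀ (m : ℕ) (X : STy σ), L = STy.next^[m+1] (.box X) →
      TSub (STy.next^[m] (.box X)) C := by
  induction h with
  | refl A =>
    intro m X e; rw [e]; exact boxWeakSucc m X
  | nextNext p ih =>
    intro m X e
    rw [iter_succ'] at e
    injection e with e2
    subst e2
    cases m with
    | zero => exact TSub.boxNext p
    | succ m =>
      rw [iter_succ'] at p ⊢
      exact TSub.nextNext (ih m X rfl)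
  | boxNext p ih =>
    intro m X e; rw [iter_succ'] at e; simp at e
  | nextDia p ih =>
    intro m X e
    rw [iter_succ'] at e
    injection e with e2
    subst e2
    exact p
  | boxR k p ih =>
    intro m X e
    obtain ⟨ek, eA⟩ := iter_box_inj e
    subst ek; subst eA
    exact TSub.boxR m (ih m _ rfl)
  | boxL p ih =>
    intro m X e; rw [iter_succ'] at e; simp at e
  | diaR p ih =>
    intro m X e
    exact TSub.diaR (ih m X e)
  | diaL k p ih =>
    intro m X e
    exact absurd e.symm (iter_box_ne_iter_dia (m+1) X 0 _)

lemma boxNextGen {L C : STy σ} (h : TSub L C) :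
    ∀ (n : ℕ) (X : STy σ), L = STy.next^[n] (.box X) → TSub L (.next C) := by
  induction h with
  | refl A =>
    intro n X e; subst e
    have := boxWeakSucc n X
    rwa [iter_succ'] at this
  | nextNext p ih =>
    intro n X e
    cases n with
    | zero => simp at e
    | succ n =>
      rw [iter_succ'] at e
      injection e with e2
      exact TSub.nextNext (ih n X e2)
  | boxNext p ih =>
    intro n X e
    exact TSub.boxNext (TSub.boxNext p)
  | nextDia p ih =>
    intro n X e
    exact TSub.nextNext p
  | boxR k p ih =>
    intro n X e
    cases k with
    | zero => exact TSub.boxNext (TSub.boxR 0 p)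
    | succ k =>
      rw [iter_succ']
      exact TSub.nextNext (TSub.boxR k (boxStripL p k _ rfl))
  | boxL p ih =>
    intro n X e
    exact TSub.boxNext (TSub.boxL p)
  | diaR p ih =>
    intro n X e
    cases n with
    | zero =>
      subst e
      exact TSub.boxNext (TSub.diaR p)
    | succ n =>
      subst e
      rw [iter_succ']
      exact TSub.nextNext (TSub.diaR (boxStripL p n X rfl))
  | diaL k p ih =>
    intro n X e
    exact absurd e.symm (iter_box_ne_iter_dia n X 0 _)

lemma diaStripR {A C : STy σ} (h : TSub A C) :
    ∀ (k : ℕ) (Y : STy σ), C = STy.next^[k+1] (.dia Y) →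
      TSub A (STy.next^[k] (.dia Y)) := by
  induction h with
  | refl A =>
    intro k Y e; rw [e]; exact diaWeakSucc k Y
  | nextNext p ih =>
    intro k Y e
    rw [iter_succ'] at e
    injection e with e2
    subst e2
    cases k with
    | zero => exact TSub.nextDia p
    | succ k =>
      rw [iter_succ']
      exact TSub.nextNext (ih k Y rfl)
  | boxNext p ih =>
    intro k Y e
    rw [iter_succ'] at e
    injection e with e2
    subst e2
    exact p
  | nextDia p ih =>
    intro k Y e; rw [iter_succ'] at e; simp at e
  | boxR m p ih =>
    intro k Y e; rw [iter_succ'] at e; simp at e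
  | boxL p ih =>
    intro k Y e
    exact TSub.boxL (ih k Y e)
  | diaR p ih =>
    intro k Y e; rw [iter_succ'] at e; simp at e
  | diaL m p ih =>
    intro k Y e
    obtain ⟨em, eY⟩ := iter_dia_inj e
    subst em; subst eY
    exact TSub.diaL k (ih k _ rfl)

end Tmp

namespace Tmp2
open Tmp

lemma TSub_inv {B C : STy σ} (h : TSub B C) :
    C = B ∨
    (∃ x y, B = .next x ∧ C = .next y ∧ TSub x y) ∨
    (∃ x y, B = .box x ∧ C = .next y ∧ TSub (.box x) y) ∨
    (∃ x y, B = .next x ∧ C = .dia y ∧ TSub x (.dia y)) ∨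
    (∃ (n : ℕ) (x : STy σ) (y : STy σ), B = STy.next^[n] (.box x) ∧ C = .box y ∧ TSub B y) ∨
    (∃ x, B = .box x ∧ TSub x C) ∨
    (∃ y, C = .dia y ∧ TSub B y) ∨
    (∃ (n : ℕ) (x : STy σ) (y : STy σ), B = .dia x ∧ C = STy.next^[n] (.dia y) ∧ TSub x C) := by
  cases h with
  | refl A => exact Or.inl rfl
  | nextNext p => exact Or.inr (Or.inl ⟨_, _, rfl, rfl, p⟩)
  | boxNext p => exact Or.inr (Or.inr (Or.inl ⟨_, _, rfl, rfl, p⟩))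
  | nextDia p => exact Or.inr (Or.inr (Or.inr (Or.inl ⟨_, _, rfl, rfl, p⟩)))
  | boxR n p => exact Or.inr (Or.inr (Or.inr (Or.inr (Or.inl ⟨n, _, _, rfl, rfl, p⟩))))
  | boxL p => exact Or.inr (Or.inr (Or.inr (Or.inr (Or.inr (Or.inl ⟨_, rfl, p⟩)))))
  | diaR p => exact Or.inr (Or.inr (Or.inr (Or.inr (Or.inr (Or.inr (Or.inl ⟨_, rfl, p⟩))))))
  | diaL n p =>
      exact Or.inr (Or.inr (Or.inr (Or.inr (Or.inr (Or.inr (Or.inr ⟨n, _, _, rfl, rfl, p⟩))))))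

def tsize : STy σ → ℕ
  | .base _ => 1
  | .next A => tsize A + 1
  | .box A => tsize A + 1
  | .dia A => tsize A + 1

lemma tsize_pos (A : STy σ) : 1 ≤ tsize A := by
  cases A <;> simp [tsize]

lemma trans_bounded : ∀ (N : ℕ) {A B C : STy σ},
    TSub A B → TSub B C → tsize A + tsize B + tsize C ≤ N → TSub A C := by
  intro N
  induction N with
  | zero =>
    intro A B C _ _ hm
    have := tsize_pos A; have := tsize_pos B; have := tsize_pos C
    omega
  | succ N ih =>
    intro A B C h1 h2 hm
    cases h1 with
    | refl => exact h2
    | @nextNext x y p1 =>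
      have h1' : TSub (.next x) (.next y) := TSub.nextNext p1
      rcases TSub_inv h2 with e | ⟨x', y', hB, hC, p⟩ | ⟨x', y', hB, hC, p⟩ |
        ⟨x', y', hB, hC, p⟩ | ⟨n, x', y', hB, hC, p⟩ | ⟨x', hB, p⟩ | ⟨y', hC, p⟩ |
        ⟨n, x', y', hB, hC, p⟩
      · subst e; exact h1'
      · injection hB with e; subst e; subst hC
        exact TSub.nextNext (ih p1 p (by simp [tsize] at hm ⊢; omega))
      · exact absurd hB (by simp)
      · injection hB with e; subst e; subst hC
        exact TSub.nextDia (ih p1 p (by simp [tsize] at hm ⊢; omega))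
      · subst hC
        have q : TSub (.next x) y' := ih h1' p (by simp [tsize] at hm ⊢; omega)
        obtain ⟨j, X, hA⟩ := boxLHS h1' n x' hB
        rw [hA]
        exact TSub.boxR j (hA ▸ q)
      · exact absurd hB (by simp)
      · subst hC
        exact TSub.diaR (ih h1' p (by simp [tsize] at hm ⊢; omega))
      · exact absurd hB (by simp)
    | @boxNext x y p1 =>
      have h1' : TSub (.box x) (.next y) := TSub.boxNext p1
      rcases TSub_inv h2 with e | ⟨x', y', hB, hC, p⟩ | ⟨x', y', hB, hC, p⟩ |
        ⟨x', y', hB, hC, p⟩ | ⟨n, x', y', hB, hC, p⟩ | ⟨x', hB, p⟩ | ⟨y', hC, p⟩ |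
        ⟨n, x', y', hB, hC, p⟩
      · subst e; exact h1'
      · injection hB with e; subst e; subst hC
        exact TSub.boxNext (ih p1 p (by simp [tsize] at hm ⊢; omega))
      · exact absurd hB (by simp)
      · injection hB with e; subst e; subst hC
        exact ih p1 p (by simp [tsize] at hm ⊢; omega)
      · subst hC
        have q : TSub (.box x) y' := ih h1' p (by simp [tsize] at hm ⊢; omega)
        exact TSub.boxR 0 q
      · exact absurd hB (by simp)
      · subst hC
        exact TSub.diaR (ih h1' p (by simp [tsize] at hm ⊢; omega))
      · exact absurd hB (by simp)
    | @nextDia x y p1 =>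
      have h1' : TSub (.next x) (.dia y) := TSub.nextDia p1
      rcases TSub_inv h2 with e | ⟨x', y', hB, hC, p⟩ | ⟨x', y', hB, hC, p⟩ |
        ⟨x', y', hB, hC, p⟩ | ⟨n, x', y', hB, hC, p⟩ | ⟨x', hB, p⟩ | ⟨y', hC, p⟩ |
        ⟨n, x', y', hB, hC, p⟩
      · subst e; exact h1'
      · exact absurd hB (by simp)
      · exact absurd hB (by simp)
      · exact absurd hB (by simp)
      · exact absurd hB.symm (iter_box_ne_iter_dia n x' 0 y)
      · exact absurd hB (by simp)
      · subst hC
        exact TSub.diaR (ih h1' p (by simp [tsize] at hm ⊢; omega))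
      · injection hB with e; subst e; subst hC
        have q : TSub x (STy.next^[n] (.dia y')) :=
          ih p1 h2 (by simp [tsize] at hm ⊢; omega)
        cases n with
        | zero => exact TSub.nextDia q
        | succ j =>
          rw [iter_succ']
          exact TSub.nextNext (diaStripR q j y' rfl)
    | @boxR x b n p1 =>
      have h1' : TSub (STy.next^[n] (.box x)) (.box b) := TSub.boxR n p1
      rcases TSub_inv h2 with e | ⟨x', y', hB, hC, p⟩ | ⟨x', y', hB, hC, p⟩ |
        ⟨x', y', hB, hC, p⟩ | ⟨m, x', y', hB, hC, p⟩ | ⟨x', hB, p⟩ | ⟨y', hC, p⟩ |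
        ⟨m, x', y', hB, hC, p⟩
      · subst e; exact h1'
      · exact absurd hB (by simp)
      · injection hB with e; subst e; subst hC
        have q := ih h1' p (by simp [tsize] at hm ⊢; omega)
        exact boxNextGen q n x rfl
      · exact absurd hB (by simp)
      · subst hC
        have q : TSub (STy.next^[n] (.box x)) y' := ih h1' p (by simp [tsize] at hm ⊢; omega)
        exact TSub.boxR n q
      · injection hB with e; subst e
        exact ih p1 p (by simp [tsize] at hm ⊢; omega)
      · subst hC
        exact TSub.diaR (ih h1' p (by simp [tsize] at hm ⊢; omega))
      · exact absurd hB (by simp)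
    | boxL p1 =>
      exact TSub.boxL (ih p1 h2 (by simp [tsize] at hm ⊢; omega))
    | @diaR _ b p1 =>
      have h1' : TSub A (.dia b) := TSub.diaR p1
      rcases TSub_inv h2 with e | ⟨x', y', hB, hC, p⟩ | ⟨x', y', hB, hC, p⟩ |
        ⟨x', y', hB, hC, p⟩ | ⟨m, x', y', hB, hC, p⟩ | ⟨x', hB, p⟩ | ⟨y', hC, p⟩ |
        ⟨m, x', y', hB, hC, p⟩
      · subst e; exact h1'
      · exact absurd hB (by simp)
      · exact absurd hB (by simp)
      · exact absurd hB (by simp)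
      · exact absurd hB.symm (iter_box_ne_iter_dia m x' 0 b)
      · exact absurd hB (by simp)
      · subst hC
        exact TSub.diaR (ih h1' p (by simp [tsize] at hm ⊢; omega))
      · injection hB with e; subst e; subst hC
        exact ih p1 p (by simp [tsize] at hm ⊢; omega)
    | @diaL x b n p1 =>
      obtain ⟨j, c, hC⟩ := diaRHS h2 n b rfl
      subst hC
      exact TSub.diaL j (ih p1 h2 (by simp [tsize] at hm ⊢; omega))

end Tmp2


theorem stmt6 (A B C : STy σ) (h1 : TSub A B) (h2 : TSub B C) : TSub A C :=
  Tmp2.trans_bounded _ h1 h2 le_rfl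
end

section
/- (Patience, part i) If A ≤ Next^n (Box B) for some n and B, then A has the form Next^k (Box A') for some k and A'. -/
variable {σ : Type}

lemma box_ne_dia (n m : ℕ) (B C : STy σ) :
    STy.next^[n] (STy.box B) ≠ STy.next^[m] (STy.dia C) := by
  induction n generalizing m with
  | zero =>
    cases m with
    | zero => simp
    | succ m => rw [Function.iterate_succ_apply']; simp
  | succ n ih =>
    cases m with
    | zero => rw [Function.iterate_succ_apply']; simp
    | succ m =>
      rw [Function.iterate_succ_apply', Function.iterate_succ_apply']
      simpa using ih m

lemma aux7 {A C : STy σ} (h : TSub A C) :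
    ∀ n (B : STy σ), C = STy.next^[n] (.box B) →
      ∃ (k : ℕ) (A' : STy σ), A = STy.next^[k] (.box A') := by
  induction h with
  | refl A => exact fun n B hC => ⟨n, B, hC⟩
  | nextNext h ih =>
    rintro n B hC
    cases n with
    | zero => simp at hC
    | succ n =>
      rw [Function.iterate_succ_apply'] at hC
      obtain ⟨k, A', hA⟩ := ih n B (by injection hC)
      exact ⟨k+1, A', by rw [Function.iterate_succ_apply', hA]⟩
  | boxNext h ih => exact fun n B hC => ⟨0, _, rfl⟩
  | nextDia h ih =>
    rintro n B hC
    exact absurd hC.symm (box_ne_dia n 0 B _)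
  | boxR m h ih => exact fun n B hC => ⟨m, _, rfl⟩
  | boxL h ih => exact fun n B hC => ⟨0, _, rfl⟩
  | diaR h ih =>
    rintro n B hC
    exact absurd hC.symm (box_ne_dia n 0 B _)
  | diaL m h ih =>
    rintro n B hC
    exact absurd hC.symm (box_ne_dia n m B _)

theorem stmt7 (A B : STy σ) (n : ℕ) (h : TSub A (STy.next^[n] (.box B))) : ∃ (k : ℕ) (A' : STy σ), A = STy.next^[k] (.box A') := aux7 h n B rfl
end

section
/- (Patience, part ii) If Next^n (Diamond A) ≤ B for some n and A, then B has the form Next^k (Diamond B') for some k and B'. -/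
variable {σ : Type}

lemma box_ne_dia_s8 (X Y : STy σ) (m n : ℕ) :
    STy.next^[m] (.box X) ≠ STy.next^[n] (.dia Y) := by
  induction m generalizing n with
  | zero => cases n with
    | zero => simp
    | succ n => rw [Function.iterate_succ_apply']; simp
  | succ m ih =>
    rw [Function.iterate_succ_apply']
    cases n with
    | zero => simp
    | succ n => rw [Function.iterate_succ_apply']; simpa using ih n

lemma stmt8_aux (C B : STy σ) (h : TSub C B) :
    ∀ n A, C = STy.next^[n] (.dia A) →
    ∃ (k : ℕ) (B' : STy σ), B = STy.next^[k] (.dia B') := by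
  induction h with
  | refl A => exact fun n A' hC => ⟨n, A', hC⟩
  | nextNext h ih =>
    rintro n A' hC
    cases n with
    | zero => simp at hC
    | succ n =>
      rw [Function.iterate_succ_apply'] at hC
      injection hC with hC
      obtain ⟨k, B', hB⟩ := ih n A' hC
      exact ⟨k+1, B', by rw [Function.iterate_succ_apply', hB]⟩
  | boxNext h ih =>
    rintro n A' hC
    exact absurd hC (box_ne_dia_s8 _ _ 0 n)
  | nextDia h ih => exact fun n A' hC => ⟨0, _, rfl⟩
  | boxR m h ih =>
    rintro n A' hC
    exact absurd hC (box_ne_dia_s8 _ _ m n)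
  | boxL h ih =>
    rintro n A' hC
    exact absurd hC (box_ne_dia_s8 _ _ 0 n)
  | diaR h ih => exact fun n A' hC => ⟨0, _, rfl⟩
  | diaL m h ih => exact fun n A' hC => ⟨m, _, rfl⟩

theorem stmt8 (A B : STy σ) (n : ℕ) (h : TSub (STy.next^[n] (.dia A)) B) : ∃ (k : ℕ) (B' : STy σ), B = STy.next^[k] (.dia B') := stmt8_aux _ _ h n A rfl
end

section
/- (Impatience, part i) If Next (Next^n (Box A)) ≤ B then Next^n (Box A) ≤ B. -/
variable {σ : Type}

lemma mono_aux (A : STy σ) : ∀ n, TSub (STy.next^[n] (STy.box A)) (STy.next (STy.next^[n] (STy.box A)))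
  | 0 => .boxNext (.refl _)
  | m+1 => by
      rw [Function.iterate_succ_apply']
      exact .nextNext (mono_aux A m)

lemma key_aux (A : STy σ) :
    ∀ n C B, TSub C B → C = STy.next (STy.next^[n] (STy.box A)) →
      TSub (STy.next^[n] (STy.box A)) B := by
  intro n
  induction n with
  | zero =>
    intro C B h
    induction h with
    | refl X => rintro rfl; exact mono_aux A 0
    | nextNext h' ih' =>
        intro hC; injection hC with hC; subst hC
        simp only [Function.iterate_zero_apply] at h' ⊢
        exact .boxNext h'
    | boxNext h' ih' => intro hC; cases hC
    | nextDia h' ih' => intro hC; injection hC with hC; subst hC; exact h'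
    | boxR m h' ih' => intro hC; exact .boxR 0 (ih' hC)
    | boxL h' ih' => intro hC; cases hC
    | diaR h' ih' => intro hC; exact .diaR (ih' hC)
    | diaL m h' ih' => intro hC; cases hC
  | succ m ih =>
    intro C B h
    induction h with
    | refl X => rintro rfl; exact mono_aux A (m+1)
    | nextNext h' ih' =>
        intro hC; injection hC with hC; subst hC
        rw [Function.iterate_succ_apply']
        refine .nextNext (ih _ _ h' ?_)
        rw [Function.iterate_succ_apply']
    | boxNext h' ih' => intro hC; cases hC
    | nextDia h' ih' => intro hC; injection hC with hC; subst hC; exact h'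
    | boxR k h' ih' => intro hC; exact .boxR (m+1) (ih' hC)
    | boxL h' ih' => intro hC; cases hC
    | diaR h' ih' => intro hC; exact .diaR (ih' hC)
    | diaL k h' ih' => intro hC; cases hC

theorem stmt9 (A B : STy σ) (n : ℕ) (h : TSub (.next (STy.next^[n] (.box A))) B) : TSub (STy.next^[n] (.box A)) B := key_aux A n _ B h rfl
end

section
/- (Impatience, part ii) If A ≤ Next (Next^n (Diamond B)) then A ≤ Next^n (Diamond B). -/
variable {σ : Type}

lemma dia_iter_inj : ∀ (m n : ℕ) (B B' : STy σ),
    STy.next^[m] (.dia B') = STy.next^[n] (.dia B) → m = n ∧ B' = B := by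
  intro m
  induction m with
  | zero =>
    intro n B B' h
    cases n with
    | zero => simp at h; exact ⟨rfl, h⟩
    | succ k => rw [Function.iterate_succ_apply'] at h; simp at h
  | succ k ih =>
    intro n B B' h
    cases n with
    | zero => rw [Function.iterate_succ_apply'] at h; simp at h
    | succ l =>
      rw [Function.iterate_succ_apply', Function.iterate_succ_apply'] at h
      injection h with h
      obtain ⟨h1, h2⟩ := ih l B B' h
      exact ⟨by omega, h2⟩

lemma impat_step : ∀ (n : ℕ) (B : STy σ),
    TSub (.next (STy.next^[n] (.dia B))) (STy.next^[n] (.dia B)) := by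
  intro n
  induction n with
  | zero => intro B; exact TSub.nextDia (TSub.refl _)
  | succ k ih =>
    intro B
    rw [Function.iterate_succ_apply']
    exact TSub.nextNext (ih B)

lemma stmt10_aux : ∀ (A C : STy σ), TSub A C → ∀ (n : ℕ) (B : STy σ),
    C = .next (STy.next^[n] (.dia B)) → TSub A (STy.next^[n] (.dia B)) := by
  intro A C h
  induction h with
  | refl A =>
    intro n B hC
    subst hC
    exact impat_step n B
  | nextNext h ih =>
    intro n B hC
    injection hC with hC
    subst hC
    cases n with
    | zero => exact TSub.nextDia h
    | succ k =>
      rw [Function.iterate_succ_apply']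
      exact TSub.nextNext (ih k B (Function.iterate_succ_apply' _ _ _))
  | boxNext h ih =>
    intro n B hC
    injection hC with hC
    rwa [← hC]
  | nextDia h ih => intro n B hC; simp at hC
  | boxR m h ih =>
    intro n B hC; simp at hC
  | boxL h ih =>
    intro n B hC
    exact TSub.boxL (ih n B hC)
  | diaR h ih => intro n B hC; simp at hC
  | diaL m h ih =>
    intro n B hC
    rw [show (STy.next^[n] (.dia B)).next = STy.next^[n+1] (.dia B) from (Function.iterate_succ_apply' _ _ _).symm] at hC
    obtain ⟨hm, hB⟩ := dia_iter_inj m (n+1) B _ hC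
    subst hm; subst hB
    exact TSub.diaL n (ih n _ (Function.iterate_succ_apply' _ _ _))

theorem stmt10 (A B : STy σ) (n : ℕ) (h : TSub A (.next (STy.next^[n] (.dia B)))) : TSub A (STy.next^[n] (.dia B)) :=
  stmt10_aux A _ h n B rfl
end

section
/- For any temporal session type A and natural numbers m ≥ n, Next^m (Diamond A) ≤ Next^n (Diamond A) in the subtyping relation. -/
variable {σ : Type}

lemma nextIter_dia (A : STy σ) (k : ℕ) : TSub (STy.next^[k] (.dia A)) (.dia A) := by
  induction k with
  | zero => exact TSub.refl _
  | succ k ih =>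
    rw [Function.iterate_succ_apply']
    exact TSub.nextDia ih

lemma nextLift {A B : STy σ} (n : ℕ) (h : TSub A B) :
    TSub (STy.next^[n] A) (STy.next^[n] B) := by
  induction n with
  | zero => exact h
  | succ n ih =>
    rw [Function.iterate_succ_apply', Function.iterate_succ_apply']
    exact TSub.nextNext ih

theorem stmt12 (A : STy σ) (m n : ℕ) (h : m ≥ n) : TSub (STy.next^[m] (.dia A)) (STy.next^[n] (.dia A)) := by
  obtain ⟨k, rfl⟩ := Nat.exists_eq_add_of_le h
  rw [show n + k = n + k from rfl, Function.iterate_add_apply]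
  exact nextLift n (nextIter_dia A k)
end

section
/- If Next^m S ≤ Next^n S where S is a basic session type constructor (not Next, Box, or Diamond), then m = n. -/
variable {σ : Type}

lemma nexts_base_ne_box (s : σ) (m : ℕ) (A : STy σ) :
    STy.next^[m] (STy.base s) ≠ STy.box A := by
  cases m with
  | zero => simp
  | succ k => rw [Function.iterate_succ_apply']; simp

lemma nexts_base_ne_dia (s : σ) (m : ℕ) (A : STy σ) :
    STy.next^[m] (STy.base s) ≠ STy.dia A := by
  cases m with
  | zero => simp
  | succ k => rw [Function.iterate_succ_apply']; simp

lemma nexts_base_inj (s : σ) : ∀ m n : ℕ,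
    STy.next^[m] (STy.base s) = STy.next^[n] (STy.base s) → m = n := by
  intro m
  induction m with
  | zero =>
    intro n h
    cases n with
    | zero => rfl
    | succ k => rw [Function.iterate_succ_apply'] at h; simp at h
  | succ k ih =>
    intro n h
    cases n with
    | zero => rw [Function.iterate_succ_apply'] at h; simp at h
    | succ l =>
      rw [Function.iterate_succ_apply', Function.iterate_succ_apply'] at h
      injection h with h
      exact congrArg Nat.succ (ih l h)

lemma tsub_nexts_base (s : σ) : ∀ {A B : STy σ}, TSub A B →
    ∀ m n : ℕ, A = STy.next^[m] (STy.base s) → B = STy.next^[n] (STy.base s) → m = n := by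
  intro A B h
  induction h with
  | refl C =>
    intro m n hA hB
    exact nexts_base_inj s m n (hA ▸ hB ▸ rfl)
  | nextNext h ih =>
    intro m n hA hB
    cases m with
    | zero => simp at hA
    | succ k =>
      cases n with
      | zero => simp at hB
      | succ l =>
        rw [Function.iterate_succ_apply'] at hA hB
        injection hA with hA
        injection hB with hB
        exact congrArg Nat.succ (ih k l hA hB)
  | boxNext h ih => intro m n hA hB; exact absurd hA.symm (nexts_base_ne_box s m _)
  | nextDia h ih => intro m n hA hB; exact absurd hB.symm (nexts_base_ne_dia s n _)
  | boxR k h ih =>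
    intro m n hA hB
    cases n with
    | zero => simp at hB
    | succ l => rw [Function.iterate_succ_apply'] at hB; simp at hB
  | boxL h ih => intro m n hA hB; exact absurd hA.symm (nexts_base_ne_box s m _)
  | diaR h ih => intro m n hA hB; exact absurd hB.symm (nexts_base_ne_dia s n _)
  | diaL k h ih => intro m n hA hB; exact absurd hA.symm (nexts_base_ne_dia s m _)

theorem stmt17 (s : σ) (m n : ℕ) (h : TSub (STy.next^[m] (.base s)) (STy.next^[n] (.base s))) : m = n := tsub_nexts_base s h m n rfl rfl
end
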